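/- Under the same i.i.d. two-level model, the expected population variance of the group satisfies E[σ_S²] = (K'²/(K'+1)²) Var₋ + (K'/(K'+1)²) Δ², where σ_S² = (1/(K'+1)) [ (r⁺ − μ_S)² + Σ_{j=1}^{K'} (r⁻_j − μ_S)² ]. -/

import Mathlib

open MeasureTheory ProbabilityTheory

/-!
Population variance is invariant under shifts, so it may be computed about the common mean `m`
of the `r⁻_j` instead of about `μ_S`: `σ_S² = A / n - (B / n) ^ 2` with `n = K' + 1`,
`A = (r⁺ - m)² + ∑ (r⁻_j - m)²` and `B = (r⁺ - m) + ∑ (r⁻_j - m)`. Then `E[A] = Δ² + K' Var₋`,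
and, by independence, `E[B²] = Var[∑ r⁻_j] + (E B)² = K' Var₋ + Δ²` as well, so
`E[σ_S²] = (1 / n - 1 / n²) (Δ² + K' Var₋)`.
-/

theorem sum_sub_mean_sq_eq {κ : Type*} [Fintype κ] (y : κ → ℝ) (c : ℝ) :
    ∑ i, (y i - (∑ j, y j) / Fintype.card κ) ^ 2 =
      ∑ i, (y i - c) ^ 2 - (∑ i, (y i - c)) ^ 2 / Fintype.card κ := by
  rcases isEmpty_or_nonempty κ with hκ | hκ
  · simp
  have hN : (Fintype.card κ : ℝ) ≠ 0 := by positivity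
  have hmean : (∑ j, y j) / Fintype.card κ = c + (∑ i, (y i - c)) / Fintype.card κ := by
    simp only [Finset.sum_sub_distrib, Finset.sum_const, Finset.card_univ, nsmul_eq_mul]
    field_simp
    ring
  simp only [hmean, sub_sq, Finset.sum_add_distrib, Finset.sum_sub_distrib, ← Finset.sum_mul,
    ← Finset.mul_sum, Finset.sum_const, Finset.card_univ, nsmul_eq_mul]
  field_simp
  ring

theorem sq_sub_mean_add_sum_sq_sub_mean_div_eq {ι : Type*} [Fintype ι] (a : ℝ) (x : ι → ℝ)
    (c : ℝ) :
    ((a - (a + ∑ i, x i) / (Fintype.card ι + 1)) ^ 2 +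
        ∑ i, (x i - (a + ∑ i, x i) / (Fintype.card ι + 1)) ^ 2) / (Fintype.card ι + 1) =
      ((a - c) ^ 2 + ∑ i, (x i - c) ^ 2) / (Fintype.card ι + 1) -
        (a - (Fintype.card ι + 1) * c + ∑ i, x i) ^ 2 / (Fintype.card ι + 1) ^ 2 := by
  have hsteiner := sum_sub_mean_sq_eq (fun o : Option ι => o.elim a x) c
  simp only [Fintype.sum_option, Fintype.card_option, Option.elim_none, Option.elim_some,
    Nat.cast_add, Nat.cast_one] at hsteiner
  have hshift : a - c + ∑ i, (x i - c) = a - (Fintype.card ι + 1) * c + ∑ i, x i := by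
    simp only [Finset.sum_sub_distrib, Finset.sum_const, Finset.card_univ, nsmul_eq_mul]
    ring
  rw [hsteiner, hshift]
  field_simp

theorem integral_sq_const_add_sum_of_iIndepFun {Ω ι : Type*} [MeasurableSpace Ω]
    {μ : Measure Ω} [IsProbabilityMeasure μ] [Fintype ι] {X : ι → Ω → ℝ}
    (hX : iIndepFun X μ) (hL2 : ∀ i, MemLp (X i) 2 μ) (c : ℝ) :
    ∫ ω, (c + ∑ i, X i ω) ^ 2 ∂μ = ∑ i, Var[X i; μ] + (c + ∑ i, ∫ ω, X i ω ∂μ) ^ 2 := by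
  have hsum : MemLp (fun ω => ∑ i, X i ω) 2 μ := memLp_finsetSum _ fun i _ => hL2 i
  have hvar : Var[fun ω => c + ∑ i, X i ω; μ] = ∑ i, Var[X i; μ] := by
    rw [variance_const_add hsum.aestronglyMeasurable, ← Finset.sum_fn,
      IndepFun.variance_sum (fun i _ => hL2 i) fun i _ j _ hij => hX.indepFun hij]
  have hmean : ∫ ω, c + ∑ i, X i ω ∂μ = c + ∑ i, ∫ ω, X i ω ∂μ := by
    rw [integral_add (integrable_const c) (hsum.integrable one_le_two), integral_const,
      integral_finsetSum _ fun i _ => (hL2 i).integrable one_le_two]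
    simp
  have hL2_add : MemLp (fun ω => c + ∑ i, X i ω) 2 μ := (memLp_const c).add hsum
  rw [← hvar, ← hmean, variance_eq_sub hL2_add]
  simp only [Pi.pow_apply]
  ring

theorem stmt_7_general {Ω : Type*} [MeasurableSpace Ω] (μ : Measure Ω) [IsProbabilityMeasure μ]
    (K' : ℕ) (rp m Var Δ : ℝ) (rneg : Fin K' → Ω → ℝ)
    (hiid : iIndepFun rneg μ)
    (hint : ∀ j, Integrable (rneg j) μ)
    (hsqint : ∀ j, Integrable (fun ω => (rneg j ω) ^ 2) μ)
    (hmean : ∀ j, ∫ ω, rneg j ω ∂μ = m)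
    (hvar : ∀ j, ∫ ω, (rneg j ω - m) ^ 2 ∂μ = Var)
    (hΔ : Δ = rp - m)
    (μS : Ω → ℝ)
    (hμS : μS = fun ω => (rp + ∑ j, rneg j ω) / ((K' : ℝ) + 1)) :
    (∫ ω, ((rp - μS ω) ^ 2 + ∑ j, (rneg j ω - μS ω) ^ 2) / ((K' : ℝ) + 1) ∂μ) =
      ((K' : ℝ) ^ 2 / ((K' : ℝ) + 1) ^ 2) * Var + ((K' : ℝ) / ((K' : ℝ) + 1) ^ 2) * Δ ^ 2 := by
  subst hΔ hμS
  have hL2 : ∀ j, MemLp (rneg j) 2 μ := fun j =>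
    (memLp_two_iff_integrable_sq (hint j).aestronglyMeasurable).2 (hsqint j)
  have hdev_int : ∀ j, Integrable (fun ω => (rneg j ω - m) ^ 2) μ := fun j =>
    ((hL2 j).sub (memLp_const m)).integrable_sq
  have hA_int : Integrable (fun ω => (rp - m) ^ 2 + ∑ j, (rneg j ω - m) ^ 2) μ :=
    (integrable_const _).add (integrable_finsetSum _ fun j _ => hdev_int j)
  have hA : ∫ ω, (rp - m) ^ 2 + ∑ j, (rneg j ω - m) ^ 2 ∂μ = (rp - m) ^ 2 + K' * Var := by
    rw [integral_add (integrable_const _) (integrable_finsetSum _ fun j _ => hdev_int j),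
      integral_finsetSum _ fun j _ => hdev_int j]
    simp [hvar]
  have hB_mem : MemLp (fun ω => rp - ((K' : ℝ) + 1) * m + ∑ j, rneg j ω) 2 μ :=
    (memLp_const (rp - ((K' : ℝ) + 1) * m)).add (memLp_finsetSum Finset.univ fun j _ => hL2 j)
  have hB : ∫ ω, (rp - ((K' : ℝ) + 1) * m + ∑ j, rneg j ω) ^ 2 ∂μ = K' * Var + (rp - m) ^ 2 := by
    have hvariance : ∀ j, Var[rneg j; μ] = Var := fun j => by
      rw [variance_eq_integral (hint j).aemeasurable, hmean j, hvar j]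
    rw [integral_sq_const_add_sum_of_iIndepFun hiid hL2]
    simp [hvariance, hmean]
    ring
  have hshift := fun ω => sq_sub_mean_add_sum_sq_sub_mean_div_eq rp (rneg · ω) m
  simp only [Fintype.card_fin] at hshift
  simp only [hshift]
  rw [integral_sub (hA_int.div_const _) (hB_mem.integrable_sq.div_const _), integral_div,
    integral_div, hA, hB]
  field_simp
  ring

/-- In the i.i.d. two-level model, the expected population variance of the group is E[σ_S²] = (K'²/(K'+1)²)Var₋ + (K'/(K'+1)²)Δ². -/
theorem stmt_7 {Ω : Type*} [MeasurableSpace Ω] (μ : Measure Ω) [IsProbabilityMeasure μ]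
    (K' : ℕ) (hK : 1 ≤ K') (rp m Var Δ : ℝ) (rneg : Fin K' → Ω → ℝ)
    (hmeas : ∀ j, Measurable (rneg j))
    (hiid : iIndepFun rneg μ)
    (hident : ∀ i j, IdentDistrib (rneg i) (rneg j) μ μ)
    (hint : ∀ j, Integrable (rneg j) μ)
    (hsqint : ∀ j, Integrable (fun ω => (rneg j ω) ^ 2) μ)
    (hmean : ∀ j, ∫ ω, rneg j ω ∂μ = m)
    (hvar : ∀ j, ∫ ω, (rneg j ω - m) ^ 2 ∂μ = Var)
    (hΔ : Δ = rp - m)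
    (μS : Ω → ℝ)
    (hμS : μS = fun ω => (rp + ∑ j, rneg j ω) / ((K' : ℝ) + 1)) :
    (∫ ω, ((rp - μS ω) ^ 2 + ∑ j, (rneg j ω - μS ω) ^ 2) / ((K' : ℝ) + 1) ∂μ) =
      ((K' : ℝ) ^ 2 / ((K' : ℝ) + 1) ^ 2) * Var + ((K' : ℝ) / ((K' : ℝ) + 1) ^ 2) * Δ ^ 2 :=
  stmt_7_general μ K' rp m Var Δ rneg hiid hint hsqint hmean hvar hΔ μS hμS
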